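/- Let A be an MDP and H the convex hull of finitely many distributions Γ_1,…,Γ_r (V-representation). Then H = H_win if and only if for every corner point Γ_ℓ (ℓ = 1,…,r) there exists a one-step MDP strategy τ with Γ_ℓ·M_τ ∈ H. -/

import Mathlib

/-!
A distribution `Δ = p + q` with nonnegative parts `p`, `q` can imitate, state by state, the
strategy `τ` used from `p` and the strategy `τ'` used from `q`: at state `i` it plays `τ` with
probability `p i / (p i + q i)` and `τ'` otherwise, and then `Δ · M` is the sum of the two
successors. Hence the distributions that can step into the convex set `H` form a convex set, and
it contains `H` as soon as it contains the corner points. Iterating such steps gives an `H`-safe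
strategy from every point of `H`.
-/

open scoped BigOperators

/-- An `n × n` real matrix is row-stochastic if all entries are nonnegative
and each row sums to `1`. -/
def RowStochastic {n : ℕ} (M : Matrix (Fin n) (Fin n) ℝ) : Prop :=
  (∀ i j, 0 ≤ M i j) ∧ ∀ i, ∑ j, M i j = 1

/-- A probability distribution on `n` states. -/
def IsDist {n : ℕ} (Δ : Fin n → ℝ) : Prop :=
  (∀ i, 0 ≤ Δ i) ∧ ∑ i, Δ i = 1

/-- A one-step MDP strategy: each state gets a probability distribution over actions. -/
def IsMDPStrategy {n : ℕ} {A : Type} [Fintype A] (τ : A → Fin n → ℝ) : Prop :=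
  (∀ α i, 0 ≤ τ α i) ∧ ∀ i, ∑ α, τ α i = 1

/-- The stochastic matrix induced by a one-step MDP strategy. -/
noncomputable def stratMatrix {n : ℕ} {A : Type} [Fintype A]
    (M : A → Matrix (Fin n) (Fin n) ℝ) (τ : A → Fin n → ℝ) :
    Matrix (Fin n) (Fin n) ℝ :=
  fun i j => ∑ α, τ α i * M α i j

/-- The distribution reached after `m` steps applying the sequence of one-step
strategies `σ` from `Δ`. -/
noncomputable def iterDist {n : ℕ} {A : Type} [Fintype A]
    (M : A → Matrix (Fin n) (Fin n) ℝ) (σ : ℕ → A → Fin n → ℝ)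
    (Δ : Fin n → ℝ) : ℕ → Fin n → ℝ
  | 0 => Δ
  | m + 1 => Matrix.vecMul (iterDist M σ Δ m) (stratMatrix M (σ m))

/-- `Δ` admits an `H`-safe strategy. -/
def HSafe {n : ℕ} {A : Type} [Fintype A]
    (M : A → Matrix (Fin n) (Fin n) ℝ) (H : Set (Fin n → ℝ)) (Δ : Fin n → ℝ) : Prop :=
  ∃ σ : ℕ → A → Fin n → ℝ,
    (∀ m, IsMDPStrategy (σ m)) ∧ ∀ m, iterDist M σ Δ m ∈ H

/-- The winning region: distributions of `H` admitting an `H`-safe strategy. -/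
def Hwin {n : ℕ} {A : Type} [Fintype A]
    (M : A → Matrix (Fin n) (Fin n) ℝ) (H : Set (Fin n → ℝ)) : Set (Fin n → ℝ) :=
  {Δ | Δ ∈ H ∧ HSafe M H Δ}

/-- A convex polytope in H-representation: a finite intersection of half-spaces. -/
def IsPolytope {n : ℕ} (H : Set (Fin n → ℝ)) : Prop :=
  ∃ (k : ℕ) (a : Fin k → Fin n → ℝ) (b : Fin k → ℝ),
    H = {x | ∀ j, ∑ i, a j i * x i ≤ b j}

/-- A one-step PFA strategy: a probability distribution over actions. -/
def IsPFAStrategy {A : Type} [Fintype A] (τ : A → ℝ) : Prop :=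
  (∀ α, 0 ≤ τ α) ∧ ∑ α, τ α = 1

/-- The stochastic matrix induced by a one-step PFA strategy. -/
noncomputable def pfaMatrix {n : ℕ} {A : Type} [Fintype A]
    (M : A → Matrix (Fin n) (Fin n) ℝ) (τ : A → ℝ) : Matrix (Fin n) (Fin n) ℝ :=
  ∑ α, τ α • M α

open Matrix

section MDP

variable {n : ℕ} {A : Type} [Fintype A]

def CanStepInto (M : A → Matrix (Fin n) (Fin n) ℝ) (H : Set (Fin n → ℝ)) (Δ : Fin n → ℝ) :
    Prop :=
  ∃ τ : A → Fin n → ℝ, IsMDPStrategy τ ∧ vecMul Δ (stratMatrix M τ) ∈ H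

noncomputable def mixStrategy (p q : Fin n → ℝ) (τ τ' : A → Fin n → ℝ) : A → Fin n → ℝ :=
  fun α i => if p i + q i = 0 then τ α i else (p i * τ α i + q i * τ' α i) / (p i + q i)

section Mix

variable {p q : Fin n → ℝ} {τ τ' : A → Fin n → ℝ}

lemma IsMDPStrategy.mix (hp : ∀ i, 0 ≤ p i) (hq : ∀ i, 0 ≤ q i)
    (hτ : IsMDPStrategy τ) (hτ' : IsMDPStrategy τ') :
    IsMDPStrategy (mixStrategy p q τ τ') := by
  refine ⟨fun α i => ?_, fun i => ?_⟩ <;> unfold mixStrategy <;> split_ifs with h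
  · exact hτ.1 α i
  · have := hτ.1 α i; have := hτ'.1 α i; have := hp i; have := hq i
    positivity
  · exact hτ.2 i
  · rw [← Finset.sum_div, div_eq_one_iff_eq h, Finset.sum_add_distrib, ← Finset.mul_sum,
      ← Finset.mul_sum, hτ.2 i, hτ'.2 i, mul_one, mul_one]

lemma add_mul_stratMatrix_mixStrategy (M : A → Matrix (Fin n) (Fin n) ℝ)
    (hp : ∀ i, 0 ≤ p i) (hq : ∀ i, 0 ≤ q i) (i j : Fin n) :
    (p i + q i) * stratMatrix M (mixStrategy p q τ τ') i j =
      p i * stratMatrix M τ i j + q i * stratMatrix M τ' i j := by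
  by_cases h : p i + q i = 0
  · have hp0 : p i = 0 := by linarith [hp i, hq i]
    have hq0 : q i = 0 := by linarith [hp i, hq i]
    simp [hp0, hq0]
  · simp only [stratMatrix, mixStrategy, if_neg h, Finset.mul_sum, ← Finset.sum_add_distrib]
    refine Finset.sum_congr rfl fun α _ => ?_
    field_simp

lemma vecMul_add_stratMatrix_mixStrategy (M : A → Matrix (Fin n) (Fin n) ℝ)
    (hp : ∀ i, 0 ≤ p i) (hq : ∀ i, 0 ≤ q i) :
    vecMul (p + q) (stratMatrix M (mixStrategy p q τ τ')) =
      vecMul p (stratMatrix M τ) + vecMul q (stratMatrix M τ') := by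
  funext j
  simp only [vecMul, dotProduct, Pi.add_apply, ← Finset.sum_add_distrib,
    add_mul_stratMatrix_mixStrategy M hp hq]

end Mix

lemma convex_setOf_nonneg_canStepInto (M : A → Matrix (Fin n) (Fin n) ℝ)
    {H : Set (Fin n → ℝ)} (hH : Convex ℝ H) :
    Convex ℝ {Δ | (∀ i, 0 ≤ Δ i) ∧ CanStepInto M H Δ} := by
  rintro x ⟨hx, τ, hτ, hxH⟩ y ⟨hy, τ', hτ', hyH⟩ a b ha hb hab
  have hax : ∀ i, 0 ≤ (a • x) i := fun i => mul_nonneg ha (hx i)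
  have hby : ∀ i, 0 ≤ (b • y) i := fun i => mul_nonneg hb (hy i)
  refine ⟨fun i => add_nonneg (hax i) (hby i), mixStrategy (a • x) (b • y) τ τ',
    hτ.mix hax hby hτ', ?_⟩
  rw [vecMul_add_stratMatrix_mixStrategy M hax hby, smul_vecMul, smul_vecMul]
  exact hH hxH hyH ha hb hab

lemma canStepInto_of_mem_convexHull (M : A → Matrix (Fin n) (Fin n) ℝ)
    {H s : Set (Fin n → ℝ)} (hH : Convex ℝ H)
    (hs : ∀ x ∈ s, (∀ i, 0 ≤ x i) ∧ CanStepInto M H x)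
    {Δ : Fin n → ℝ} (hΔ : Δ ∈ convexHull ℝ s) : CanStepInto M H Δ :=
  (convexHull_min hs (convex_setOf_nonneg_canStepInto M hH) hΔ).2

lemma HSafe.canStepInto {M : A → Matrix (Fin n) (Fin n) ℝ} {H : Set (Fin n → ℝ)}
    {Δ : Fin n → ℝ} (h : HSafe M H Δ) : CanStepInto M H Δ := by
  obtain ⟨σ, hσ, hmem⟩ := h
  exact ⟨σ 0, hσ 0, hmem 1⟩

lemma hSafe_of_forall_canStepInto {M : A → Matrix (Fin n) (Fin n) ℝ} {H : Set (Fin n → ℝ)}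
    (hstep : ∀ Δ ∈ H, CanStepInto M H Δ) {Δ : Fin n → ℝ} (hΔ : Δ ∈ H) : HSafe M H Δ := by
  choose τ hτ hτH using fun x : H => hstep x x.2
  let step : H → H := fun x => ⟨vecMul x (stratMatrix M (τ x)), hτH x⟩
  let orbit : ℕ → H := fun m => step^[m] ⟨Δ, hΔ⟩
  have horbit : ∀ m, iterDist M (fun m => τ (orbit m)) Δ m = orbit m := by
    intro m
    induction m with
    | zero => rfl
    | succ m ih =>
      simp only [iterDist, ih, orbit, Function.iterate_succ_apply']
      rfl
  exact ⟨fun m => τ (orbit m), fun m => hτ _, fun m => horbit m ▸ (orbit m).2⟩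

end MDP

theorem stmt19_general {n : ℕ} {A : Type} [Fintype A]
    (M : A → Matrix (Fin n) (Fin n) ℝ)
    (r : ℕ) (Γ : Fin r → Fin n → ℝ) (hΓ : ∀ ℓ, IsDist (Γ ℓ))
    (H : Set (Fin n → ℝ)) (hH : H = convexHull ℝ (Set.range Γ)) :
    H = Hwin M H ↔
      ∀ ℓ : Fin r, ∃ τ : A → Fin n → ℝ, IsMDPStrategy τ ∧
        Matrix.vecMul (Γ ℓ) (stratMatrix M τ) ∈ H := by
  have hΓH : ∀ ℓ, Γ ℓ ∈ H := fun ℓ => hH ▸ subset_convexHull ℝ _ (Set.mem_range_self ℓ)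
  constructor
  · intro hwin ℓ
    exact (hwin ▸ hΓH ℓ : Γ ℓ ∈ Hwin M H).2.canStepInto
  · intro hcorner
    have hstep : ∀ Δ ∈ H, CanStepInto M H Δ := fun Δ hΔ =>
      canStepInto_of_mem_convexHull M (hH ▸ convex_convexHull ℝ _)
        (by rintro _ ⟨ℓ, rfl⟩; exact ⟨(hΓ ℓ).1, hcorner ℓ⟩) (hH ▸ hΔ)
    exact Set.Subset.antisymm (fun Δ hΔ => ⟨hΔ, hSafe_of_forall_canStepInto hstep hΔ⟩)
      fun _ hΔ => hΔ.1

theorem stmt19 {n : ℕ} {A : Type} [Fintype A]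
    (M : A → Matrix (Fin n) (Fin n) ℝ) (hM : ∀ α, RowStochastic (M α))
    (r : ℕ) (Γ : Fin r → Fin n → ℝ) (hΓ : ∀ ℓ, IsDist (Γ ℓ))
    (H : Set (Fin n → ℝ)) (hH : H = convexHull ℝ (Set.range Γ)) :
    H = Hwin M H ↔
      ∀ ℓ : Fin r, ∃ τ : A → Fin n → ℝ, IsMDPStrategy τ ∧
        Matrix.vecMul (Γ ℓ) (stratMatrix M τ) ∈ H :=
  stmt19_general M r Γ hΓ H hH
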